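/- arXiv:2110.00599 — 2 statements merged into one kernel-verified Lean document; each statement's English description precedes it below -/
import Mathlib

section
/- Let A, B be bounded invertible operators on a complex separable Hilbert space H such that (A−I)(B−I), (B−I)(A−I), (A*−I)(B−I), and (B−I)(A*−I) are trace class. Let A = U|A| be the polar decomposition of A. Then U is unitary, |A| is invertible, and the operators (|A|−I)(B−I), (B−I)(|A|−I), (U−I)(B−I), and (B−I)(U−I) are all trace class. -/
/-!
The trace class operators form a two-sided ideal `S₁`; closure under sums is the one
non-formal point, and it comes from two isometries `V, W` with `V*V = W*W = 1`, `V*W = 0`, which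
exist whenever `H` is infinite-dimensional.

Work in the quotient ring by `S₁` and let `d` be the class of `B - I`. The hypotheses say that
the classes of `A` and `A*` fix `d` on both sides, and the conclusion says the same of `|A|` and
`U`. Such elements form a submonoid, so `|A|² = A*A` fixes `d`. As `|A| ≥ 0`, `1 + |A|` is
invertible, and `(1 + |A|)(|A| - 1)d = (|A|² - 1)d = 0` shows that `|A|` fixes `d`; then so does
`U`, since `U|A| = A`. That `|A|` is invertible and `U` unitary only uses `|A|² = A*A` with `A`
invertible.
-/

open Filter NormedSpace ContinuousLinearMap
open scoped Topology

noncomputable section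

variable {H : Type} [NormedAddCommGroup H] [InnerProductSpace ℂ H] [CompleteSpace H]

/-- `T` is a Hilbert–Schmidt operator: for every Hilbert basis, `∑ ‖T eᵢ‖² < ∞`. -/
def IsHilbertSchmidt (T : H →L[ℂ] H) : Prop :=
  ∀ (ι : Type) (b : HilbertBasis ι ℂ H), Summable fun i => ‖T (b i)‖ ^ 2

/-- `T` is a trace class operator, i.e. a product of two Hilbert–Schmidt operators. -/
def IsTraceClass (T : H →L[ℂ] H) : Prop :=
  ∃ A B : H →L[ℂ] H, IsHilbertSchmidt A ∧ IsHilbertSchmidt B ∧ T = A ∘L B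

/-- `T` is trace class and its trace equals `τ`:
for every Hilbert basis, `∑ ⟪eᵢ, T eᵢ⟫ = τ`. -/
def HasTrace (T : H →L[ℂ] H) (τ : ℂ) : Prop :=
  IsTraceClass T ∧
  ∀ (ι : Type) (b : HilbertBasis ι ℂ H),
    HasSum (fun i => (inner ℂ (b i) (T (b i)) : ℂ)) τ

/-- `T = I + S` with `S` trace class, and the Fredholm determinant of `T` equals `d`:
for every Hilbert basis, the finite-section determinants of `T` converge to `d`
along the net of finite subsets of the index set. -/
def HasFredholmDet (T : H →L[ℂ] H) (d : ℂ) : Prop :=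
  IsTraceClass (T - 1) ∧
  ∀ (ι : Type) (b : HilbertBasis ι ℂ H),
    letI := Classical.decEq ι
    Filter.Tendsto (fun s : Finset ι =>
      Matrix.det (Matrix.of fun i j : s => (inner ℂ (b (i : ι)) (T (b (j : ι))) : ℂ)))
      Filter.atTop (nhds d)


section Algebra

variable {M : Type*} [Monoid M]

def twoSidedStabilizer (d : M) : Submonoid M where
  carrier := {x | x * d = d ∧ d * x = d}
  mul_mem' := fun {x y} ⟨hx₁, hx₂⟩ ⟨hy₁, hy₂⟩ =>
    ⟨by rw [mul_assoc, hy₁, hx₁], by rw [← mul_assoc, hx₂, hy₂]⟩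
  one_mem' := ⟨one_mul d, mul_one d⟩

theorem mem_twoSidedStabilizer {d x : M} :
    x ∈ twoSidedStabilizer d ↔ x * d = d ∧ d * x = d :=
  Iff.rfl

theorem mem_twoSidedStabilizer_of_mul_mem {d u r : M} (hr : IsUnit r)
    (hur : u * r ∈ twoSidedStabilizer d) (hr' : r ∈ twoSidedStabilizer d) :
    u ∈ twoSidedStabilizer d := by
  obtain ⟨hur₁, hur₂⟩ := hur
  obtain ⟨hr₁, hr₂⟩ := hr'
  refine ⟨by rw [← hr₁, ← mul_assoc, hur₁, hr₁], hr.mul_right_cancel ?_⟩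
  rw [mul_assoc, hur₂, hr₂]

theorem mem_twoSidedStabilizer_of_mul_self_mem {R : Type*} [Ring R] {d r : R}
    (hr : IsUnit (1 + r)) (hrr : r * r ∈ twoSidedStabilizer d) : r ∈ twoSidedStabilizer d := by
  obtain ⟨hrr₁, hrr₂⟩ := hrr
  refine ⟨hr.mul_left_cancel ?_, hr.mul_right_cancel ?_⟩
  · rw [add_mul, add_mul, one_mul, one_mul, ← mul_assoc, hrr₁, add_comm]
  · rw [mul_add, mul_add, mul_one, mul_one, mul_assoc d r r, hrr₂, add_comm]

theorem IsUnit.mem_unitary_of_eq_mul {M : Type*} [Monoid M] [StarMul M] {a u r : M}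
    (ha : IsUnit a) (hr : IsUnit r) (hr_sa : IsSelfAdjoint r) (hrr : r * r = star a * a)
    (h : a = u * r) : u ∈ unitary M := by
  obtain ⟨r, rfl⟩ := hr
  have hu : IsUnit u := (Units.isUnit_mul_units u r).1 (h ▸ ha)
  refine hu.mem_unitary_of_star_mul_self ?_
  have : (r : M) * (star u * u) * r = r * 1 * r := by
    calc (r : M) * (star u * u) * r = star (u * r) * (u * r) := by
          rw [star_mul, hr_sa.star_eq]; simp only [mul_assoc]
      _ = r * 1 * r := by rw [← h, ← hrr, mul_one]
  exact r.mul_right_inj.1 ((Units.mul_left_inj r).1 this)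

end Algebra

section HilbertSchmidt

variable {E : Type} [NormedAddCommGroup E] [InnerProductSpace ℂ E]

theorem HilbertBasis.hasSum_norm_inner_sq {ι : Type} (b : HilbertBasis ι ℂ E) (x : E) :
    HasSum (fun i => ‖inner ℂ (b i) x‖ ^ 2) (‖x‖ ^ 2) := by
  simpa [b.repr_apply_apply] using lp.hasSum_norm (p := 2) (by norm_num) (b.repr x)

theorem IsHilbertSchmidt.zero : IsHilbertSchmidt (0 : E →L[ℂ] E) := fun _ _ => by simp

theorem IsHilbertSchmidt.add {S T : E →L[ℂ] E} (hS : IsHilbertSchmidt S)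
    (hT : IsHilbertSchmidt T) : IsHilbertSchmidt (S + T) := fun ι b => by
  refine .of_nonneg_of_le (fun i => by positivity) (fun i => ?_)
    (((hS ι b).add (hT ι b)).mul_left 2)
  calc ‖(S + T) (b i)‖ ^ 2 ≤ (‖S (b i)‖ + ‖T (b i)‖) ^ 2 := by gcongr; exact norm_add_le _ _
    _ ≤ 2 * (‖S (b i)‖ ^ 2 + ‖T (b i)‖ ^ 2) := add_sq_le

theorem IsHilbertSchmidt.mul_left (S : E →L[ℂ] E) {T : E →L[ℂ] E} (hT : IsHilbertSchmidt T) :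
    IsHilbertSchmidt (S * T) := fun ι b => by
  refine .of_nonneg_of_le (fun i => by positivity) (fun i => ?_) ((hT ι b).mul_left (‖S‖ ^ 2))
  rw [← mul_pow]
  gcongr
  exact S.le_opNorm _

theorem IsHilbertSchmidt.of_finiteDimensional [FiniteDimensional ℂ E] (T : E →L[ℂ] E) :
    IsHilbertSchmidt T := fun _ b =>
  have := b.orthonormal.linearIndependent.finite
  .of_finite

theorem HilbertBasis.finiteDimensional {ι : Type} [Finite ι] (b : HilbertBasis ι ℂ E) :
    FiniteDimensional ℂ E :=
  have := Fintype.ofFinite ι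
  Module.Finite.of_basis b.toOrthonormalBasis.toBasis

variable [CompleteSpace E]

theorem IsHilbertSchmidt.adjoint {T : E →L[ℂ] E} (hT : IsHilbertSchmidt T) :
    IsHilbertSchmidt (ContinuousLinearMap.adjoint T) := fun ι b => by
  have hF : 0 ≤ fun p : ι × ι => ‖inner ℂ (b p.2) (T (b p.1))‖ ^ 2 := fun p => by positivity
  have hsum : Summable fun p : ι × ι => ‖inner ℂ (b p.2) (T (b p.1))‖ ^ 2 := by
    refine (summable_prod_of_nonneg hF).2
      ⟨fun i => (b.hasSum_norm_inner_sq (T (b i))).summable, ?_⟩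
    simpa only [fun i => (b.hasSum_norm_inner_sq (T (b i))).tsum_eq] using hT ι b
  refine ((summable_prod_of_nonneg fun p => hF p.swap).1 hsum.prod_symm).2.congr fun j => ?_
  rw [← (b.hasSum_norm_inner_sq _).tsum_eq]
  refine tsum_congr fun i => ?_
  simp only [Prod.fst_swap, Prod.snd_swap, adjoint_inner_right, norm_inner_symm]

theorem IsHilbertSchmidt.mul_right {T : E →L[ℂ] E} (hT : IsHilbertSchmidt T) (S : E →L[ℂ] E) :
    IsHilbertSchmidt (T * S) := by
  have := (hT.adjoint.mul_left (ContinuousLinearMap.adjoint S)).adjoint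
  rwa [← star_eq_adjoint, ← star_eq_adjoint, ← star_eq_adjoint, ← star_mul, star_star] at this

end HilbertSchmidt

section Isometries

variable {E : Type} [NormedAddCommGroup E] [InnerProductSpace ℂ E]

theorem inner_eq_zero_of_hasSum {ι κ : Type} {f : ι → E} {g : κ → E} {x y : E}
    (hf : HasSum f x) (hg : HasSum g y) (h : ∀ i j, inner ℂ (f i) (g j) = 0) :
    inner ℂ x y = 0 := by
  have hxg (j : κ) : inner ℂ x (g j) = 0 := by
    have := (hf.mapL (innerSL ℂ (g j))).tsum_eq
    simp only [innerSL_apply_apply, inner_eq_zero_symm.mp (h _ j), tsum_zero] at this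
    exact inner_eq_zero_symm.mp this.symm
  have := (hg.mapL (innerSL ℂ x)).tsum_eq
  simpa only [innerSL_apply_apply, hxg, tsum_zero, eq_comm] using this

variable [CompleteSpace E]

def HilbertBasis.isometryTo {ι : Type} (b : HilbertBasis ι ℂ E) {v : ι → E}
    (hv : Orthonormal ℂ v) : E →ₗᵢ[ℂ] E :=
  hv.orthogonalFamily.linearIsometry.comp b.repr.toLinearIsometry

theorem HilbertBasis.hasSum_isometryTo {ι : Type} (b : HilbertBasis ι ℂ E) {v : ι → E}
    (hv : Orthonormal ℂ v) (x : E) :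
    HasSum (fun i => inner ℂ (b i) x • v i) (b.isometryTo hv x) := by
  simpa [b.repr_apply_apply, HilbertBasis.isometryTo] using
    hv.orthogonalFamily.hasSum_linearIsometry (b.repr x)

theorem HilbertBasis.exists_isometries_of_infinite {ι : Type} [Infinite ι]
    (b : HilbertBasis ι ℂ E) :
    ∃ V W : E →L[ℂ] E, adjoint V * V = 1 ∧
      adjoint W * W = 1 ∧ adjoint V * W = 0 := by
  obtain ⟨e⟩ : Nonempty (ι ⊕ ι ≃ ι) :=
    Cardinal.eq.1 (by simp [Cardinal.add_eq_self (Cardinal.aleph0_le_mk ι)])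
  have hv := b.orthonormal.comp _ e.injective
  have hv₁ := hv.comp _ Sum.inl_injective
  have hv₂ := hv.comp _ Sum.inr_injective
  set V := b.isometryTo hv₁
  set W := b.isometryTo hv₂
  refine ⟨V.toContinuousLinearMap, W.toContinuousLinearMap,
    V.toContinuousLinearMap.norm_map_iff_adjoint_comp_self.1 V.norm_map,
    W.toContinuousLinearMap.norm_map_iff_adjoint_comp_self.1 W.norm_map, ?_⟩
  ext x
  refine ext_inner_left ℂ fun y => ?_
  rw [mul_apply_eq_comp, adjoint_inner_right, zero_apply, inner_zero_right]
  refine inner_eq_zero_of_hasSum (b.hasSum_isometryTo hv₁ y) (b.hasSum_isometryTo hv₂ x)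
    fun i j => ?_
  have hij : inner ℂ (((b ∘ e) ∘ Sum.inl) i) (((b ∘ e) ∘ Sum.inr) j) = 0 := hv.2 Sum.inl_ne_inr
  rw [inner_smul_left, inner_smul_right, hij, mul_zero, mul_zero]

end Isometries

section TraceClass

variable {E : Type} [NormedAddCommGroup E] [InnerProductSpace ℂ E]

theorem IsTraceClass.zero : IsTraceClass (0 : E →L[ℂ] E) :=
  ⟨0, 0, .zero, .zero, rfl⟩

theorem IsTraceClass.mul_left (S : E →L[ℂ] E) {T : E →L[ℂ] E} (hT : IsTraceClass T) :
    IsTraceClass (S * T) := by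
  obtain ⟨P, Q, hP, hQ, rfl⟩ := hT
  exact ⟨S * P, Q, hP.mul_left S, hQ, rfl⟩

theorem IsTraceClass.neg {T : E →L[ℂ] E} (hT : IsTraceClass T) : IsTraceClass (-T) := by
  simpa using hT.mul_left (-1)

variable [CompleteSpace E]

theorem IsTraceClass.mul_right {T : E →L[ℂ] E} (hT : IsTraceClass T) (S : E →L[ℂ] E) :
    IsTraceClass (T * S) := by
  obtain ⟨P, Q, hP, hQ, rfl⟩ := hT
  exact ⟨P, Q * S, hP, hQ.mul_right S, rfl⟩

theorem IsTraceClass.add {S T : E →L[ℂ] E} (hS : IsTraceClass S) (hT : IsTraceClass T) :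
    IsTraceClass (S + T) := by
  obtain ⟨ι, b, -⟩ := exists_hilbertBasis ℂ E
  cases finite_or_infinite ι
  · have := b.finiteDimensional
    exact ⟨S + T, 1, .of_finiteDimensional _, .of_finiteDimensional _, (comp_id _).symm⟩
  obtain ⟨P₁, Q₁, hP₁, hQ₁, rfl⟩ := hS
  obtain ⟨P₂, Q₂, hP₂, hQ₂, rfl⟩ := hT
  obtain ⟨V, W, hV, hW, hVW⟩ := b.exists_isometries_of_infinite
  have hWV : adjoint W * V = 0 := by
    simpa [← star_eq_adjoint] using congrArg star hVW
  refine ⟨P₁ * adjoint V + P₂ * adjoint W, V * Q₁ + W * Q₂,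
    (hP₁.mul_right _).add (hP₂.mul_right _), (hQ₁.mul_left _).add (hQ₂.mul_left _), ?_⟩
  change P₁ * Q₁ + P₂ * Q₂ = (P₁ * adjoint V + P₂ * adjoint W) * (V * Q₁ + W * Q₂)
  calc P₁ * Q₁ + P₂ * Q₂
      = P₁ * (adjoint V * V) * Q₁ + P₁ * (adjoint V * W) * Q₂
        + P₂ * (adjoint W * V) * Q₁ + P₂ * (adjoint W * W) * Q₂ := by
        rw [hV, hW, hVW, hWV]; noncomm_ring
    _ = _ := by noncomm_ring

def traceClassIdeal : TwoSidedIdeal (E →L[ℂ] E) :=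
  .mk' {T | IsTraceClass T} .zero .add .neg (fun h => h.mul_left _) (fun h => h.mul_right _)

theorem traceClassIdeal_mk'_eq_zero_iff {T : E →L[ℂ] E} :
    traceClassIdeal.ringCon.mk' T = 0 ↔ IsTraceClass T := by
  refine (RingCon.eq traceClassIdeal.ringCon (a := T) (b := 0)).trans ?_
  rw [TwoSidedIdeal.rel_iff, sub_zero, traceClassIdeal, TwoSidedIdeal.mem_mk']
  rfl

theorem traceClassIdeal_mk'_mem_twoSidedStabilizer_iff {X B : E →L[ℂ] E} :
    traceClassIdeal.ringCon.mk' X ∈ twoSidedStabilizer (traceClassIdeal.ringCon.mk' (B - 1)) ↔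
      IsTraceClass ((X - 1) * (B - 1)) ∧ IsTraceClass ((B - 1) * (X - 1)) := by
  rw [← traceClassIdeal_mk'_eq_zero_iff, ← traceClassIdeal_mk'_eq_zero_iff, map_mul, map_mul,
    map_sub _ X, map_one]
  generalize traceClassIdeal.ringCon.mk' (B - 1) = d
  simp only [mem_twoSidedStabilizer, sub_mul, mul_sub, one_mul, mul_one, sub_eq_zero]

end TraceClass

theorem polar_decomposition_traceClass_general
    (A B U R : H →L[ℂ] H) (hA : IsUnit A)
    (h1 : IsTraceClass ((A - 1) * (B - 1)))
    (h2 : IsTraceClass ((B - 1) * (A - 1)))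
    (h3 : IsTraceClass ((ContinuousLinearMap.adjoint A - 1) * (B - 1)))
    (h4 : IsTraceClass ((B - 1) * (ContinuousLinearMap.adjoint A - 1)))
    (hR : R.IsPositive) (hR2 : R * R = ContinuousLinearMap.adjoint A * A)
    (hpolar : A = U * R) :
    U ∈ unitary (H →L[ℂ] H) ∧ IsUnit R ∧
      IsTraceClass ((R - 1) * (B - 1)) ∧ IsTraceClass ((B - 1) * (R - 1)) ∧
      IsTraceClass ((U - 1) * (B - 1)) ∧ IsTraceClass ((B - 1) * (U - 1)) := by
  have hA' : IsUnit (adjoint A) := by simpa [star_eq_adjoint] using hA.star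
  have hR_unit : IsUnit R := (isUnit_pow_iff two_ne_zero).1 (by rw [sq, hR2]; exact hA'.mul hA)
  have hU : U ∈ unitary (H →L[ℂ] H) :=
    hA.mem_unitary_of_eq_mul hR_unit hR.isSelfAdjoint (by rwa [star_eq_adjoint]) hpolar
  set π := (traceClassIdeal (E := H)).ringCon.mk'
  have hAS : π A ∈ twoSidedStabilizer (π (B - 1)) :=
    traceClassIdeal_mk'_mem_twoSidedStabilizer_iff.2 ⟨h1, h2⟩
  have hA'S : π (adjoint A) ∈ twoSidedStabilizer (π (B - 1)) :=
    traceClassIdeal_mk'_mem_twoSidedStabilizer_iff.2 ⟨h3, h4⟩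
  have h1R : IsUnit (1 + R) :=
    (isStrictlyPositive_one.add_nonneg ((nonneg_iff_isPositive R).2 hR)).isUnit
  have hRS : π R ∈ twoSidedStabilizer (π (B - 1)) :=
    mem_twoSidedStabilizer_of_mul_self_mem (by simpa using h1R.map π)
      (by rw [← map_mul, hR2, map_mul]; exact mul_mem hA'S hAS)
  have hUS : π U ∈ twoSidedStabilizer (π (B - 1)) :=
    mem_twoSidedStabilizer_of_mul_mem (hR_unit.map π) (by rwa [← map_mul, ← hpolar]) hRS
  obtain ⟨hR₁, hR₂⟩ := traceClassIdeal_mk'_mem_twoSidedStabilizer_iff.1 hRS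
  obtain ⟨hU₁, hU₂⟩ := traceClassIdeal_mk'_mem_twoSidedStabilizer_iff.1 hUS
  exact ⟨hU, hR_unit, hR₁, hR₂, hU₁, hU₂⟩

/-- **Lemma 2.1, first part.** Under the hypotheses of the main theorem, if `A = U·|A|`
is the polar decomposition of `A` (here `R = |A|` is the positive square root of `A*A`),
then `U` is unitary, `|A|` is invertible, and `(|A|−I)(B−I)`, `(B−I)(|A|−I)`,
`(U−I)(B−I)`, `(B−I)(U−I)` are all trace class. -/
theorem polar_decomposition_traceClass [TopologicalSpace.SeparableSpace H]
    (A B U R : H →L[ℂ] H) (hA : IsUnit A) (hB : IsUnit B)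
    (h1 : IsTraceClass ((A - 1) * (B - 1)))
    (h2 : IsTraceClass ((B - 1) * (A - 1)))
    (h3 : IsTraceClass ((ContinuousLinearMap.adjoint A - 1) * (B - 1)))
    (h4 : IsTraceClass ((B - 1) * (ContinuousLinearMap.adjoint A - 1)))
    (hR : R.IsPositive) (hR2 : R * R = ContinuousLinearMap.adjoint A * A)
    (hpolar : A = U * R) :
    U ∈ unitary (H →L[ℂ] H) ∧ IsUnit R ∧
      IsTraceClass ((R - 1) * (B - 1)) ∧ IsTraceClass ((B - 1) * (R - 1)) ∧
      IsTraceClass ((U - 1) * (B - 1)) ∧ IsTraceClass ((B - 1) * (U - 1)) :=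
  polar_decomposition_traceClass_general A B U R hA h1 h2 h3 h4 hR hR2 hpolar
end
end

section
/- Let A be a bounded normal operator and B a bounded operator on a complex separable Hilbert space H such that (e^A − I)(e^B − I) and (e^B − I)(e^A − I) are trace class. Let P = χ_{2πiℤ}(A) be the spectral projection of A onto the lattice 2πiℤ. Then (e^{AP} − I)(e^B − I) = P(e^A − I)(e^B − I) is trace class, the commutator [e^{AP}, e^B] = [P(e^A − I), e^B − I] is trace class, and e^{AP} = I. -/
/-!
The operator `AP` is normal with spectrum in `2πiℤ`, where `exp` is identically `1`, so the
functional calculus gives `e^{AP} = I`. Since `P` is an idempotent commuting with `A`, the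
exponential series gives `e^{AP} - I = P(e^A - I)`. Hence both sides of each claimed identity
vanish, and `0` is trace class.
-/

open Filter NormedSpace ContinuousLinearMap
open scoped Topology

noncomputable section

variable {H : Type} [NormedAddCommGroup H] [InnerProductSpace ℂ H] [CompleteSpace H]

open scoped Nat

theorem Commute.isStarNormal_mul {R : Type*} [Monoid R] [StarMul R] {a b : R}
    (hab : Commute a (star b)) [ha : IsStarNormal a] [hb : IsStarNormal b] :
    IsStarNormal (a * b) := by
  have hba : Commute (star a) b := _root_.star_star b ▸ hab.star_star
  rw [isStarNormal_iff, star_mul]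
  exact ((hab.symm.mul_right hb.star_comm_self).mul_left
    (ha.star_comm_self.mul_right hba))

section Exponential

variable {𝔸 : Type*} [NormedRing 𝔸] [NormedAlgebra ℂ 𝔸] [CompleteSpace 𝔸]

theorem exp_mul_sub_one_of_isIdempotentElem {a p : 𝔸} (hp : IsIdempotentElem p)
    (hap : Commute a p) : exp (a * p) - 1 = p * (exp a - 1) := by
  -- the `n = 0` term of the series of `a * p` is `1` rather than `p`
  have hsum : HasSum (fun n => p * ((n !⁻¹ : ℂ) • a ^ n) + (Pi.single 0 (1 - p) : ℕ → 𝔸) n)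
      (p * exp a + (1 - p)) :=
    ((exp_series_hasSum_exp' a).mul_left p).add (hasSum_pi_single 0 (1 - p))
  have hterms : (fun n => ((n !⁻¹ : ℂ) • (a * p) ^ n)) =
      fun n => p * ((n !⁻¹ : ℂ) • a ^ n) + (Pi.single 0 (1 - p) : ℕ → 𝔸) n := by
    funext n
    cases n with
    | zero => simp
    | succ n =>
      rw [hap.mul_pow, hp.pow_succ_eq, (hap.pow_left _).eq, mul_smul_comm]
      simp
  have hexp : exp (a * p) = p * exp a + (1 - p) :=
    (exp_series_hasSum_exp' (𝕂 := ℂ) (a * p)).unique (hterms ▸ hsum)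
  rw [hexp, mul_sub, mul_one]
  abel

end Exponential

theorem exp_eq_one_of_forall_mem_spectrum {A : Type*} {p : A → Prop} [NormedRing A] [StarRing A]
    [NormedAlgebra ℂ A] [ContinuousFunctionalCalculus ℂ A p] {a : A} (ha : p a)
    (h : ∀ z ∈ spectrum ℂ a, Complex.exp z = 1) : exp a = 1 := by
  rw [← CFC.complex_exp_eq_normedSpace_exp ha, cfc_congr h, cfc_const 1 a ha, map_one]

theorem isHilbertSchmidt_zero {E : Type} [NormedAddCommGroup E] [InnerProductSpace ℂ E] :
    IsHilbertSchmidt (0 : E →L[ℂ] E) := fun _ _ => by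
  simp

theorem isTraceClass_zero {E : Type} [NormedAddCommGroup E] [InnerProductSpace ℂ E] :
    IsTraceClass (0 : E →L[ℂ] E) :=
  ⟨0, 0, isHilbertSchmidt_zero, isHilbertSchmidt_zero, (zero_comp 0).symm⟩

theorem spectral_projection_onto_lattice_general
    (A B P : H →L[ℂ] H) (hA : IsStarNormal A)
    (hPsa : IsSelfAdjoint P) (hPidem : P * P = P)
    (hPA : A * P = P * A)
    (hspec : spectrum ℂ (A * P) ⊆
      {z : ℂ | ∃ k : ℤ, z = 2 * (Real.pi : ℂ) * Complex.I * (k : ℂ)}) :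
    (exp (A * P) - 1) * (exp B - 1) = P * (exp A - 1) * (exp B - 1) ∧
      IsTraceClass ((exp (A * P) - 1) * (exp B - 1)) ∧
      exp (A * P) * exp B - exp B * exp (A * P)
        = (P * (exp A - 1)) * (exp B - 1) - (exp B - 1) * (P * (exp A - 1)) ∧
      IsTraceClass (exp (A * P) * exp B - exp B * exp (A * P)) ∧
      exp (A * P) = 1 := by
  have hAP : IsStarNormal (A * P) :=
    have := hPsa.isStarNormal
    Commute.isStarNormal_mul (by rwa [hPsa.star_eq])
  have hexp : exp (A * P) = 1 := exp_eq_one_of_forall_mem_spectrum hAP fun z hz => by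
    obtain ⟨k, rfl⟩ := hspec hz
    exact Complex.exp_eq_one_iff.2 ⟨k, by ring⟩
  have hcorner : exp (A * P) - 1 = P * (exp A - 1) :=
    exp_mul_sub_one_of_isIdempotentElem hPidem hPA
  have hcorner_zero : P * (exp A - 1) = 0 := by rw [← hcorner, hexp, sub_self]
  refine ⟨by rw [hcorner], ?_, ?_, ?_, hexp⟩
  · simpa [hexp] using isTraceClass_zero
  · simp [hexp, hcorner_zero]
  · simpa [hexp] using isTraceClass_zero

/-- **Second part of the proof of Lemma 2.4.** Let `A` be normal and `B` bounded with
`(e^A−I)(e^B−I)`, `(e^B−I)(e^A−I)` trace class, and let `P = χ_{2πiℤ}(A)` — formalized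
as an orthogonal projection commuting with `A` and `A*` such that the spectrum of `AP`
lies in `2πiℤ`. Then `(e^{AP}−I)(e^B−I) = P(e^A−I)(e^B−I)` is trace class, the
commutator `[e^{AP}, e^B] = [P(e^A−I), e^B−I]` is trace class, and `e^{AP} = I`. -/
theorem spectral_projection_onto_lattice [TopologicalSpace.SeparableSpace H]
    (A B P : H →L[ℂ] H) (hA : IsStarNormal A)
    (h1 : IsTraceClass ((exp A - 1) * (exp B - 1)))
    (h2 : IsTraceClass ((exp B - 1) * (exp A - 1)))
    (hPsa : IsSelfAdjoint P) (hPidem : P * P = P)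
    (hPA : A * P = P * A)
    (hPA' : ContinuousLinearMap.adjoint A * P = P * ContinuousLinearMap.adjoint A)
    (hspec : spectrum ℂ (A * P) ⊆
      {z : ℂ | ∃ k : ℤ, z = 2 * (Real.pi : ℂ) * Complex.I * (k : ℂ)}) :
    (exp (A * P) - 1) * (exp B - 1) = P * (exp A - 1) * (exp B - 1) ∧
      IsTraceClass ((exp (A * P) - 1) * (exp B - 1)) ∧
      exp (A * P) * exp B - exp B * exp (A * P)
        = (P * (exp A - 1)) * (exp B - 1) - (exp B - 1) * (P * (exp A - 1)) ∧
      IsTraceClass (exp (A * P) * exp B - exp B * exp (A * P)) ∧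
      exp (A * P) = 1 :=
  spectral_projection_onto_lattice_general A B P hA hPsa hPidem hPA hspec
end
end
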